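/- Let G be a simple graph on a finite vertex type V, let φ : Sym2 V → Fin K assign a class to each edge, and let c : Sym2 V → ℝ≥0 assign a weight to each edge. Suppose π* is a path from s to g whose key (θ(π*), weight(π*)) is minimal, with respect to the lexicographic order combining the colex order on class-count vectors and the usual order on weights, among all paths from s to g, and suppose the underlying walk of π* decomposes as the concatenation of a walk p₁ from s to v and a walk p₂ from v to g. Then p₁ is key-minimal among all walks from s to v: for every walk w from s to v, (θ(p₁), weight(p₁)) ≤ (θ(w), weight(w)) in the same lexicographic order. -/

import Mathlib

open scoped NNReal

/-- The colexicographic strict order on `Fin K → ℕ`. -/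
def ColexLt {K : ℕ} (a b : Fin K → ℕ) : Prop :=
  ∃ k, a k < b k ∧ ∀ j, k < j → a j = b j

/-- The colexicographic order: `a ≤_colex b` iff `a <_colex b` or `a = b`. -/
def ColexLe {K : ℕ} (a b : Fin K → ℕ) : Prop :=
  ColexLt a b ∨ a = b

/-- The class-count vector of a walk: `theta G φ w k` is the number of edges of `w`
(with multiplicity) whose class under `φ` is `k`. -/
def theta {V : Type*} {K : ℕ} (G : SimpleGraph V) (φ : Sym2 V → Fin K)
    {s g : V} (w : G.Walk s g) : Fin K → ℕ :=
  fun k => w.edges.countP (fun e => decide (φ e = k))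

/-- The total weight of a walk: the sum of `c` over its edges (with multiplicity). -/
def weight {V : Type*} (G : SimpleGraph V) (c : Sym2 V → ℝ≥0)
    {s g : V} (w : G.Walk s g) : ℝ≥0 :=
  (w.edges.map c).sum

/-- The largest class `k` with `theta G φ w k > 0`, for a walk with at least one edge. -/
def maxClass {V : Type*} {K : ℕ} (G : SimpleGraph V) (φ : Sym2 V → Fin K)
    {s g : V} (w : G.Walk s g) (hw : w.edges ≠ []) : Fin K :=
  (Finset.univ.filter fun k => 0 < theta G φ w k).max' (by
    obtain ⟨e, he⟩ := List.exists_mem_of_ne_nil w.edges hw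
    refine ⟨φ e, ?_⟩
    simp only [Finset.mem_filter, Finset.mem_univ, true_and, theta]
    exact Finset.mem_filter.mpr ⟨Finset.mem_univ _, List.countP_pos_iff.mpr ⟨e, he, by simp⟩⟩)

/-- A walk between distinct vertices has at least one edge. -/
theorem edges_ne_nil_of_ne {V : Type*} {G : SimpleGraph V} {s g : V}
    (h : s ≠ g) (w : G.Walk s g) : w.edges ≠ [] := by
  cases w with
  | nil => exact absurd rfl h
  | cons h' p => simp

/-- Lexicographic order on pairs `(maxClass, count)`. -/
def PairLe {K : ℕ} (p q : Fin K × ℕ) : Prop :=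
  p.1 < q.1 ∨ (p.1 = q.1 ∧ p.2 ≤ q.2)

/-- Lexicographic order on keys `(class-count vector, weight)`:
first the colex order on the vectors, then the usual order on weights. -/
def KeyLe {K : ℕ} (p q : (Fin K → ℕ) × ℝ≥0) : Prop :=
  ColexLt p.1 q.1 ∨ (p.1 = q.1 ∧ p.2 ≤ q.2)

/-! Replacing `p₁` by any walk `w : s ⟶ v` turns `π` into the walk `w ++ p₂`, whose bypass is a
path with a sub-multiset of its edges, hence no larger key. So
`key π ≤ key (w ++ p₂)`, and since keys add along concatenation and the colex/lex order is
cancellative, the common suffix `p₂` can be removed. -/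

section KeyOrder

variable {K : ℕ}

lemma ColexLt.trans {a b d : Fin K → ℕ} (hab : ColexLt a b) (hbd : ColexLt b d) :
    ColexLt a d := by
  obtain ⟨k₁, hk₁, heq₁⟩ := hab
  obtain ⟨k₂, hk₂, heq₂⟩ := hbd
  rcases lt_trichotomy k₁ k₂ with h | rfl | h
  · exact ⟨k₂, heq₁ k₂ h ▸ hk₂, fun j hj => (heq₁ j (h.trans hj)).trans (heq₂ j hj)⟩
  · exact ⟨k₁, hk₁.trans hk₂, fun j hj => (heq₁ j hj).trans (heq₂ j hj)⟩
  · exact ⟨k₁, heq₂ k₁ h ▸ hk₁, fun j hj => (heq₁ j hj).trans (heq₂ j (h.trans hj))⟩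

lemma KeyLe.trans {p q r : (Fin K → ℕ) × ℝ≥0} (hpq : KeyLe p q) (hqr : KeyLe q r) :
    KeyLe p r := by
  rcases hpq with hpq | ⟨hpq, hpq'⟩ <;> rcases hqr with hqr | ⟨hqr, hqr'⟩
  · exact Or.inl (hpq.trans hqr)
  · exact Or.inl (hqr ▸ hpq)
  · exact Or.inl (hpq ▸ hqr)
  · exact Or.inr ⟨hpq.trans hqr, hpq'.trans hqr'⟩

/-- The witness of `a <_colex b` is the largest coordinate where `a` and `b` differ. -/
lemma keyLe_of_le {a b : Fin K → ℕ} {x y : ℝ≥0} (hab : a ≤ b) (hxy : x ≤ y) :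
    KeyLe (a, x) (b, y) := by
  by_cases h : a = b
  · exact Or.inr ⟨h, hxy⟩
  have hne : (Finset.univ.filter fun k => a k ≠ b k).Nonempty := by
    obtain ⟨k, hk⟩ := Function.ne_iff.mp h
    exact ⟨k, Finset.mem_filter.mpr ⟨Finset.mem_univ k, hk⟩⟩
  obtain ⟨-, hk⟩ := Finset.mem_filter.mp (Finset.max'_mem _ hne)
  refine Or.inl ⟨_, (hab _).lt_of_ne hk, fun j hj => ?_⟩
  by_contra hj'
  exact hj.not_ge (Finset.le_max' _ j (Finset.mem_filter.mpr ⟨Finset.mem_univ j, hj'⟩))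

lemma KeyLe.of_add_right {a b d : Fin K → ℕ} {x y t : ℝ≥0}
    (h : KeyLe (a + d, x + t) (b + d, y + t)) : KeyLe (a, x) (b, y) := by
  rcases h with ⟨k, hk, heq⟩ | ⟨heq, hle⟩
  · exact Or.inl ⟨k, Nat.lt_of_add_lt_add_right hk,
      fun j hj => Nat.add_right_cancel (heq j hj)⟩
  · exact Or.inr ⟨add_right_cancel heq, le_of_add_le_add_right hle⟩

end KeyOrder

section WalkKey

variable {V : Type*} {K : ℕ} (G : SimpleGraph V) (φ : Sym2 V → Fin K) (c : Sym2 V → ℝ≥0)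

lemma theta_append {s v g : V} (p : G.Walk s v) (q : G.Walk v g) :
    theta G φ (p.append q) = theta G φ p + theta G φ q := by
  ext k
  simp [theta, SimpleGraph.Walk.edges_append, List.countP_append]

lemma weight_append {s v g : V} (p : G.Walk s v) (q : G.Walk v g) :
    weight G c (p.append q) = weight G c p + weight G c q := by
  simp [weight, SimpleGraph.Walk.edges_append]

lemma keyLe_of_edges_sublist {s g s' g' : V} {p : G.Walk s g} {q : G.Walk s' g'}
    (h : p.edges.Sublist q.edges) :
    KeyLe (theta G φ p, weight G c p) (theta G φ q, weight G c q) :=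
  keyLe_of_le (fun _ => h.countP_le) ((h.map c).sum_le_sum fun _ _ => zero_le)

end WalkKey

theorem prefix_of_optimal_is_optimal_general {V : Type*} {K : ℕ}
    (G : SimpleGraph V) (φ : Sym2 V → Fin K) (c : Sym2 V → ℝ≥0) {s v g : V}
    (π : G.Walk s g)
    (hmin : ∀ p : G.Walk s g, p.IsPath →
      KeyLe (theta G φ π, weight G c π) (theta G φ p, weight G c p))
    (p₁ : G.Walk s v) (p₂ : G.Walk v g) (hdecomp : π = p₁.append p₂) :
    ∀ w : G.Walk s v,
      KeyLe (theta G φ p₁, weight G c p₁) (theta G φ w, weight G c w) := by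
  classical
  intro w
  have hkey : KeyLe (theta G φ π, weight G c π)
      (theta G φ (w.append p₂), weight G c (w.append p₂)) :=
    (hmin _ (w.append p₂).bypass_isPath).trans
      (keyLe_of_edges_sublist G φ c (w.append p₂).edges_bypass_sublist_edges)
  rw [hdecomp, theta_append, theta_append, weight_append, weight_append] at hkey
  exact hkey.of_add_right

/-- If a key-minimal path `π*` from `s` to `g` decomposes as the concatenation of a walk
`p₁` from `s` to `v` and a walk `p₂` from `v` to `g`, then `p₁` is key-minimal among all
walks from `s` to `v`. -/
theorem prefix_of_optimal_is_optimal {V : Type*} [Fintype V] {K : ℕ}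
    (G : SimpleGraph V) (φ : Sym2 V → Fin K) (c : Sym2 V → ℝ≥0) {s v g : V}
    (π : G.Walk s g) (hπ : π.IsPath)
    (hmin : ∀ p : G.Walk s g, p.IsPath →
      KeyLe (theta G φ π, weight G c π) (theta G φ p, weight G c p))
    (p₁ : G.Walk s v) (p₂ : G.Walk v g) (hdecomp : π = p₁.append p₂) :
    ∀ w : G.Walk s v,
      KeyLe (theta G φ p₁, weight G c p₁) (theta G φ w, weight G c w) :=
  prefix_of_optimal_is_optimal_general G φ c π hmin p₁ p₂ hdecomp
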